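/- Let γ, λ be real numbers. The Fréchet derivative of the map W : ℝ² → ℝ² at the fixed point B = (1, 0) is the diagonal linear map (u, v) ↦ ((7 − 3γ)·u, (4 − √(3/2)·λ)·v), and the Fréchet derivative of W at the fixed point C = (−1, 0) is the diagonal linear map (u, v) ↦ ((7 − 3γ)·u, (4 + √(3/2)·λ)·v). In particular the eigenvalues at B are 7 − 3γ and 4 − √(3/2)·λ, and at C they are 7 − 3γ and 4 + √(3/2)·λ. -/

import Mathlib

noncomputable def f (γ lam x y : ℝ) : ℝ :=
  (3/2) * x * (2*x^2 + γ*(1 - x^2 - y^2)) - 3*x + Real.sqrt (3/2) * lam * y^2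

noncomputable def g (γ lam x y : ℝ) : ℝ :=
  (3/2) * y * (2*x^2 + γ*(1 - x^2 - y^2)) - Real.sqrt (3/2) * lam * x * y

/-- The unit-step Euler discretization map W(x,y) = (x + f(x,y), y + g(x,y)). -/
noncomputable def W (γ lam : ℝ) (p : ℝ × ℝ) : ℝ × ℝ :=
  (p.1 + f γ lam p.1 p.2, p.2 + g γ lam p.1 p.2)

lemma key (γ lam a : ℝ) :
    ∃ L : ℝ × ℝ →L[ℝ] ℝ × ℝ, HasFDerivAt (W γ lam) L (a, 0) ∧
      ∀ u v : ℝ, L (u, v) =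
        ((1 + 9*a^2 - (9/2)*γ*a^2 + (3/2)*γ - 3) * u,
         (1 + 3*a^2 + (3/2)*γ*(1 - a^2) - Real.sqrt (3/2) * lam * a) * v) := by
  have hx : HasFDerivAt (fun p : ℝ × ℝ => p.1)
      (ContinuousLinearMap.fst ℝ ℝ ℝ) (a, 0) := hasFDerivAt_fst
  have hy : HasFDerivAt (fun p : ℝ × ℝ => p.2)
      (ContinuousLinearMap.snd ℝ ℝ ℝ) (a, 0) := hasFDerivAt_snd
  have hx2 : HasFDerivAt (fun p : ℝ × ℝ => p.1 ^ 2) _ (a, 0) :=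
    ((hasDerivAt_pow 2 a).comp_hasFDerivAt ((a, 0) : ℝ × ℝ) hx :
      HasFDerivAt ((fun x : ℝ => x ^ 2) ∘ fun p : ℝ × ℝ => p.1) _ (a, 0))
  have hy2 : HasFDerivAt (fun p : ℝ × ℝ => p.2 ^ 2) _ (a, 0) :=
    ((hasDerivAt_pow 2 (0:ℝ)).comp_hasFDerivAt ((a, 0) : ℝ × ℝ) hy :
      HasFDerivAt ((fun x : ℝ => x ^ 2) ∘ fun p : ℝ × ℝ => p.2) _ (a, 0))
  have hA := ((hx2.const_mul 2).add
      ((((hasFDerivAt_const (1:ℝ) ((a, 0) : ℝ × ℝ)).sub hx2).sub hy2).const_mul γ))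
  have h1 := (hx.add ((((hx.const_mul (3/2)).mul hA).sub (hx.const_mul 3)).add
      (hy2.const_mul (Real.sqrt (3/2) * lam))))
  have h2 := (hy.add (((hy.const_mul (3/2)).mul hA).sub
      (((hx.const_mul (Real.sqrt (3/2) * lam)).mul hy))))
  have hW := HasFDerivAt.prodMk h1 h2
  refine ⟨_, hW, fun u v => ?_⟩
  simp [ContinuousLinearMap.prod_apply, ContinuousLinearMap.add_apply,
    ContinuousLinearMap.sub_apply, ContinuousLinearMap.smulRight_apply,
    ContinuousLinearMap.comp_apply, ContinuousLinearMap.smul_apply,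
    ContinuousLinearMap.coe_fst', ContinuousLinearMap.coe_snd', smul_eq_mul]
  constructor <;> ring


/-- The Fréchet derivative of W at B = (1,0) is (u,v) ↦ ((7 − 3γ)u, (4 − √(3/2)λ)v),
and at C = (−1,0) it is (u,v) ↦ ((7 − 3γ)u, (4 + √(3/2)λ)v). -/
theorem stmt_6 (γ lam : ℝ) :
    (∃ L : ℝ × ℝ →L[ℝ] ℝ × ℝ,
      HasFDerivAt (W γ lam) L (1, 0) ∧
      ∀ u v : ℝ, L (u, v) = ((7 - 3*γ) * u, (4 - Real.sqrt (3/2) * lam) * v)) ∧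
    (∃ L : ℝ × ℝ →L[ℝ] ℝ × ℝ,
      HasFDerivAt (W γ lam) L (-1, 0) ∧
      ∀ u v : ℝ, L (u, v) = ((7 - 3*γ) * u, (4 + Real.sqrt (3/2) * lam) * v)) := by
  constructor
  · obtain ⟨L, hL, he⟩ := key γ lam 1
    refine ⟨L, hL, fun u v => ?_⟩
    rw [he, Prod.mk.injEq]
    constructor <;> ring
  · obtain ⟨L, hL, he⟩ := key γ lam (-1)
    refine ⟨L, hL, fun u v => ?_⟩
    rw [he, Prod.mk.injEq]
    constructor <;> ring
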